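/- RotatE-Box models inversion: Let c, c' : Fin k → ℂ satisfy ‖c j‖ = 1 and c' j = conj(c j) for every index j. Then for all entities e1, e2, the point e2 is inside the query box of e1 and the zero-offset box (c, 0) if and only if e1 is inside the query box of e2 and the zero-offset box (c', 0). -/

import Mathlib

/-- A point `v` is inside the box with center `c` and offset `o`. -/
def insideBox {k : ℕ} (c o v : Fin k → ℂ) : Prop :=
  ∀ j, (c j).re - (o j).re ≤ (v j).re ∧ (v j).re ≤ (c j).re + (o j).re ∧
       (c j).im - (o j).im ≤ (v j).im ∧ (v j).im ≤ (c j).im + (o j).im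

/-- Componentwise (Hadamard) product. -/
def hadamard {k : ℕ} (u w : Fin k → ℂ) : Fin k → ℂ := fun j => u j * w j

lemma insideBox_zero_iff {k : ℕ} (c v : Fin k → ℂ) : insideBox c 0 v ↔ v = c := by
  simp only [insideBox, funext_iff, Complex.ext_iff, le_antisymm_iff, Pi.zero_apply,
    Complex.zero_re, Complex.zero_im, sub_zero, add_zero]
  exact forall_congr' fun _ => by tauto

lemma hadamard_eq_mul {k : ℕ} (u w : Fin k → ℂ) : hadamard u w = u * w := rfl

lemma eq_mul_iff_eq_mul_of_mul_eq_one {M : Type*} [CommMonoid M] {u w : M} (h : u * w = 1)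
    (a b : M) : b = a * u ↔ a = b * w := by
  constructor
  · rintro rfl
    rw [mul_assoc, h, mul_one]
  · rintro rfl
    rw [mul_assoc, mul_comm w, h, mul_one]

lemma mul_conj_eq_one_of_norm_eq_one {z : ℂ} (hz : ‖z‖ = 1) : z * starRingEnd ℂ z = 1 := by
  rw [Complex.mul_conj', hz, Complex.ofReal_one, one_pow]

theorem rotate_box_models_inversion {k : ℕ} (c c' : Fin k → ℂ)
    (hc : ∀ j, ‖c j‖ = 1) (hc' : ∀ j, c' j = starRingEnd ℂ (c j))
    (e1 e2 : Fin k → ℂ) :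
    insideBox (hadamard e1 c) 0 e2 ↔ insideBox (hadamard e2 c') 0 e1 := by
  have hcc' : c * c' = 1 := funext fun j => by
    rw [Pi.mul_apply, hc' j, mul_conj_eq_one_of_norm_eq_one (hc j), Pi.one_apply]
  rw [insideBox_zero_iff, insideBox_zero_iff, hadamard_eq_mul, hadamard_eq_mul]
  exact eq_mul_iff_eq_mul_of_mul_eq_one hcc' e1 e2
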